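/- arXiv:1308.6177 — 5 statements merged into one kernel-verified Lean document; each statement's English description precedes it below -/
import Mathlib

section
/- Let ρ, u, w : ℤ × ℤ → ℝ define v = (u,w) on a (K+1)×(K+1) grid, extended to ghost indices by ρ_{-1,j} = ρ_{0,j}, ρ_{K+1,j} = ρ_{K,j} (and analogously in j), and v_{-1,j} = -v_{0,j}, v_{K+1,j} = -v_{K,j} (and analogously in j). Define the discrete advection operator (diṽ_h(ρ v ⊗ v))_{i,j} = (1/(4h))[(v_{i,j}+v_{i+1,j})(ρ_{i,j}u_{i,j}+ρ_{i+1,j}u_{i+1,j}) - (v_{i,j}+v_{i-1,j})(ρ_{i,j}u_{i,j}+ρ_{i-1,j}u_{i-1,j}) + (v_{i,j}+v_{i,j+1})(ρ_{i,j}w_{i,j}+ρ_{i,j+1}w_{i,j+1}) - (v_{i,j}+v_{i,j-1})(ρ_{i,j}w_{i,j}+ρ_{i,j-1}w_{i,j-1})] and the central divergence (div_h(ρv))_{i,j} = (1/(2h))[ρ_{i+1,j}u_{i+1,j} - ρ_{i-1,j}u_{i-1,j} + ρ_{i,j+1}w_{i,j+1} - ρ_{i,j-1}w_{i,j-1}].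 Then ∑_{i,j=0}^{K} (diṽ_h(ρ v ⊗ v))_{i,j} · v_{i,j} = ∑_{i,j=0}^{K} (1/2)‖v_{i,j}‖² (div_h(ρ v))_{i,j}. -/
/-- First component of the special discrete advection operator
`(div~_h(ρ v ⊗ v))_{i,j}` for `v = (u, w)`. -/
noncomputable def advX (h : ℝ) (ρ u w : ℤ → ℤ → ℝ) (i j : ℤ) : ℝ :=
  (1 / (4 * h)) *
    ((u i j + u (i + 1) j) * (ρ i j * u i j + ρ (i + 1) j * u (i + 1) j)
      - (u i j + u (i - 1) j) * (ρ i j * u i j + ρ (i - 1) j * u (i - 1) j)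
      + (u i j + u i (j + 1)) * (ρ i j * w i j + ρ i (j + 1) * w i (j + 1))
      - (u i j + u i (j - 1)) * (ρ i j * w i j + ρ i (j - 1) * w i (j - 1)))

/-- Second component of the special discrete advection operator. -/
noncomputable def advY (h : ℝ) (ρ u w : ℤ → ℤ → ℝ) (i j : ℤ) : ℝ :=
  (1 / (4 * h)) *
    ((w i j + w (i + 1) j) * (ρ i j * u i j + ρ (i + 1) j * u (i + 1) j)
      - (w i j + w (i - 1) j) * (ρ i j * u i j + ρ (i - 1) j * u (i - 1) j)
      + (w i j + w i (j + 1)) * (ρ i j * w i j + ρ i (j + 1) * w i (j + 1))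
      - (w i j + w i (j - 1)) * (ρ i j * w i j + ρ i (j - 1) * w i (j - 1)))

/-- Central discrete divergence `(div_h(ρ v))_{i,j}`. -/
noncomputable def cdiv (h : ℝ) (ρ u w : ℤ → ℤ → ℝ) (i j : ℤ) : ℝ :=
  (1 / (2 * h)) *
    (ρ (i + 1) j * u (i + 1) j - ρ (i - 1) j * u (i - 1) j
      + ρ i (j + 1) * w i (j + 1) - ρ i (j - 1) * w i (j - 1))

noncomputable def Gx (ρ u w : ℤ → ℤ → ℝ) (i j : ℤ) : ℝ :=
  (u i j * u (i+1) j + w i j * w (i+1) j) * (ρ i j * u i j + ρ (i+1) j * u (i+1) j)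
noncomputable def Hy (ρ u w : ℤ → ℤ → ℝ) (i j : ℤ) : ℝ :=
  (u i j * u i (j+1) + w i j * w i (j+1)) * (ρ i j * w i j + ρ i (j+1) * w i (j+1))

lemma pointwise (h : ℝ) (ρ u w : ℤ → ℤ → ℝ) (hh : h ≠ 0) (i j : ℤ) :
    advX h ρ u w i j * u i j + advY h ρ u w i j * w i j
      = (1/2) * (u i j ^ 2 + w i j ^ 2) * cdiv h ρ u w i j
        + (1/(4*h)) * (Gx ρ u w i j - Gx ρ u w (i-1) j)
        + (1/(4*h)) * (Hy ρ u w i j - Hy ρ u w i (j-1)) := by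
  have h1 : i - 1 + 1 = i := by ring
  have h2 : j - 1 + 1 = j := by ring
  simp only [advX, advY, cdiv, Gx, Hy, h1, h2]
  field_simp
  ring

lemma telescope (K : ℕ) (f : ℤ → ℝ) :
    ∑ i ∈ Finset.range (K + 1), (f (i : ℤ) - f ((i : ℤ) - 1))
      = f (K : ℤ) - f (-1) := by
  have := Finset.sum_range_sub (f := fun n : ℕ => f ((n : ℤ) - 1)) (n := K + 1)
  calc ∑ i ∈ Finset.range (K + 1), (f (i : ℤ) - f ((i : ℤ) - 1))
      = ∑ i ∈ Finset.range (K + 1),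
          ((fun n : ℕ => f ((n : ℤ) - 1)) (i + 1) - (fun n : ℕ => f ((n : ℤ) - 1)) i) := by
        apply Finset.sum_congr rfl
        intro i _
        have : ((i : ℤ) + 1 : ℤ) - 1 = (i : ℤ) := by ring
        push_cast
        rw [this]
    _ = f (((K + 1 : ℕ) : ℤ) - 1) - f (((0 : ℕ) : ℤ) - 1) := this
    _ = f (K : ℤ) - f (-1) := by
        have e1 : ((K + 1 : ℕ) : ℤ) - 1 = (K : ℤ) := by push_cast; ring
        have e2 : ((0 : ℕ) : ℤ) - 1 = -1 := by norm_num
        rw [e1, e2]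


/-- Compatibility lemma: with Neumann ghost cells for `ρ` and anti-reflecting
ghost cells for `v = (u,w)`,
`∑ (div~_h(ρ v ⊗ v))_{i,j} · v_{i,j} = ∑ (1/2)‖v_{i,j}‖² (div_h(ρ v))_{i,j}`. -/
theorem discrete_advection_compatibility (K : ℕ) (h : ℝ) (hh : 0 < h)
    (ρ u w : ℤ → ℤ → ℝ)
    (hρ1 : ∀ j, ρ (-1) j = ρ 0 j) (hρ2 : ∀ j, ρ ((K : ℤ) + 1) j = ρ (K : ℤ) j)
    (hρ3 : ∀ i, ρ i (-1) = ρ i 0) (hρ4 : ∀ i, ρ i ((K : ℤ) + 1) = ρ i (K : ℤ))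
    (hu1 : ∀ j, u (-1) j = -u 0 j) (hu2 : ∀ j, u ((K : ℤ) + 1) j = -u (K : ℤ) j)
    (hu3 : ∀ i, u i (-1) = -u i 0) (hu4 : ∀ i, u i ((K : ℤ) + 1) = -u i (K : ℤ))
    (hw1 : ∀ j, w (-1) j = -w 0 j) (hw2 : ∀ j, w ((K : ℤ) + 1) j = -w (K : ℤ) j)
    (hw3 : ∀ i, w i (-1) = -w i 0) (hw4 : ∀ i, w i ((K : ℤ) + 1) = -w i (K : ℤ)) :
    ∑ i ∈ Finset.range (K + 1), ∑ j ∈ Finset.range (K + 1),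
        (advX h ρ u w i j * u (i : ℤ) (j : ℤ) + advY h ρ u w i j * w (i : ℤ) (j : ℤ))
      = ∑ i ∈ Finset.range (K + 1), ∑ j ∈ Finset.range (K + 1),
          (1 / 2) * (u (i : ℤ) (j : ℤ) ^ 2 + w (i : ℤ) (j : ℤ) ^ 2)
            * cdiv h ρ u w i j := by

  have hne : h ≠ 0 := ne_of_gt hh
  have e0 : (-1 : ℤ) + 1 = 0 := by ring
  have bx : ∀ j : ℤ, Gx ρ u w (K : ℤ) j - Gx ρ u w (-1) j = 0 := by
    intro j
    simp only [Gx, e0, hρ1, hρ2, hu1, hu2, hw1, hw2]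
    ring
  have byy : ∀ i : ℤ, Hy ρ u w i (K : ℤ) - Hy ρ u w i (-1) = 0 := by
    intro i
    simp only [Hy, e0, hρ3, hρ4, hu3, hu4, hw3, hw4]
    ring
  have hA : ∑ i ∈ Finset.range (K + 1), ∑ j ∈ Finset.range (K + 1),
      (1/(4*h)) * (Gx ρ u w (i : ℤ) (j : ℤ) - Gx ρ u w ((i : ℤ) - 1) (j : ℤ)) = 0 := by
    rw [Finset.sum_comm]
    apply Finset.sum_eq_zero
    intro j _
    rw [← Finset.mul_sum, telescope K (fun i => Gx ρ u w i (j : ℤ)), bx (j : ℤ), mul_zero]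
  have hB : ∑ i ∈ Finset.range (K + 1), ∑ j ∈ Finset.range (K + 1),
      (1/(4*h)) * (Hy ρ u w (i : ℤ) (j : ℤ) - Hy ρ u w (i : ℤ) ((j : ℤ) - 1)) = 0 := by
    apply Finset.sum_eq_zero
    intro i _
    rw [← Finset.mul_sum, telescope K (fun j => Hy ρ u w (i : ℤ) j), byy (i : ℤ), mul_zero]
  calc ∑ i ∈ Finset.range (K + 1), ∑ j ∈ Finset.range (K + 1),
        (advX h ρ u w i j * u (i : ℤ) (j : ℤ) + advY h ρ u w i j * w (i : ℤ) (j : ℤ))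
      = ∑ i ∈ Finset.range (K + 1), ∑ j ∈ Finset.range (K + 1),
          ((1/2) * (u (i : ℤ) (j : ℤ) ^ 2 + w (i : ℤ) (j : ℤ) ^ 2) * cdiv h ρ u w i j
            + (1/(4*h)) * (Gx ρ u w (i : ℤ) (j : ℤ) - Gx ρ u w ((i : ℤ) - 1) (j : ℤ))
            + (1/(4*h)) * (Hy ρ u w (i : ℤ) (j : ℤ) - Hy ρ u w (i : ℤ) ((j : ℤ) - 1))) :=
        Finset.sum_congr rfl fun i _ => Finset.sum_congr rfl fun j _ =>
          pointwise h ρ u w hne (i : ℤ) (j : ℤ)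
    _ = _ := by
        simp only [Finset.sum_add_distrib]
        rw [hA, hB, add_zero, add_zero]
end

section
/- Let U : ℝ → ℝ be convex and differentiable, K ∈ ℕ, and let a, b : Fin (K+1) × Fin (K+1) → ℝ be grid functions with equal total mass (∑ a_{i,j} = ∑ b_{i,j}). Extend by Neumann ghost cells and suppose that for all test functions ψ with ∑ ψ_{i,j} = 0: ∑_{i,j}[(U'(a_{i,j}) - U'(b_{i,j}))ψ_{i,j} + γ (∇̃_h(a - b))_{i,j} · (∇̃_h ψ)_{i,j}] = 0, where γ > 0 and (∇̃_h f)_{i,j} = ((f_{i+1,j} - f_{i,j})/h, (f_{i,j+1} - f_{i,j})/h). Then a = b. -/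
/-- Rigidity for the weak discrete elliptic relation: if for every zero-mean
test grid function `ψ` (with Neumann ghost extension) one has
`∑ [(U'(a) - U'(b)) ψ + γ ∇̃_h(a-b) · ∇̃_h ψ] = 0`, with `U` convex
differentiable and `a`, `b` of equal total mass, then `a = b` on the grid. -/
theorem discrete_weak_rigidity (K : ℕ) (h γ : ℝ) (hh : 0 < h) (hγ : 0 < γ)
    (U : ℝ → ℝ) (hU : ConvexOn ℝ Set.univ U) (hUd : Differentiable ℝ U)
    (a b : ℤ → ℤ → ℝ)
    (ha1 : ∀ j, a (-1) j = a 0 j) (ha2 : ∀ j, a ((K : ℤ) + 1) j = a (K : ℤ) j)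
    (ha3 : ∀ i, a i (-1) = a i 0) (ha4 : ∀ i, a i ((K : ℤ) + 1) = a i (K : ℤ))
    (hb1 : ∀ j, b (-1) j = b 0 j) (hb2 : ∀ j, b ((K : ℤ) + 1) j = b (K : ℤ) j)
    (hb3 : ∀ i, b i (-1) = b i 0) (hb4 : ∀ i, b i ((K : ℤ) + 1) = b i (K : ℤ))
    (hmass : ∑ i ∈ Finset.range (K + 1), ∑ j ∈ Finset.range (K + 1),
        a (i : ℤ) (j : ℤ)
      = ∑ i ∈ Finset.range (K + 1), ∑ j ∈ Finset.range (K + 1), b (i : ℤ) (j : ℤ))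
    (hweak : ∀ ψ : ℤ → ℤ → ℝ,
      (∀ j, ψ (-1) j = ψ 0 j) → (∀ j, ψ ((K : ℤ) + 1) j = ψ (K : ℤ) j) →
      (∀ i, ψ i (-1) = ψ i 0) → (∀ i, ψ i ((K : ℤ) + 1) = ψ i (K : ℤ)) →
      (∑ i ∈ Finset.range (K + 1), ∑ j ∈ Finset.range (K + 1),
          ψ (i : ℤ) (j : ℤ)) = 0 →
      ∑ i ∈ Finset.range (K + 1), ∑ j ∈ Finset.range (K + 1),
          ((deriv U (a (i : ℤ) (j : ℤ)) - deriv U (b (i : ℤ) (j : ℤ)))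
              * ψ (i : ℤ) (j : ℤ)
            + γ * ((((a ((i : ℤ) + 1) (j : ℤ) - b ((i : ℤ) + 1) (j : ℤ))
                      - (a (i : ℤ) (j : ℤ) - b (i : ℤ) (j : ℤ))) / h)
                    * ((ψ ((i : ℤ) + 1) (j : ℤ) - ψ (i : ℤ) (j : ℤ)) / h)
                  + (((a (i : ℤ) ((j : ℤ) + 1) - b (i : ℤ) ((j : ℤ) + 1))
                      - (a (i : ℤ) (j : ℤ) - b (i : ℤ) (j : ℤ))) / h)
                    * ((ψ (i : ℤ) ((j : ℤ) + 1) - ψ (i : ℤ) (j : ℤ)) / h)))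
        = 0) :
    ∀ i j : ℤ, 0 ≤ i → i ≤ K → 0 ≤ j → j ≤ K → a i j = b i j := by
  -- difference grid function
  set d : ℤ → ℤ → ℝ := fun i j => a i j - b i j with hd
  -- deriv U is monotone
  have hmono : Monotone (deriv U) := by
    have := hU.monotoneOn_deriv (fun x _ => hUd x)
    intro x y hxy
    exact this (Set.mem_univ x) (Set.mem_univ y) hxy
  -- zero mean of d
  have hdmean : ∑ i ∈ Finset.range (K + 1), ∑ j ∈ Finset.range (K + 1),
      d (i : ℤ) (j : ℤ) = 0 := by
    simp only [hd, Finset.sum_sub_distrib]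
    rw [hmass]; ring
  -- apply weak relation to ψ = d
  have hkey := hweak d
    (fun j => by simp [hd, ha1, hb1]) (fun j => by simp [hd, ha2, hb2])
    (fun i => by simp [hd, ha3, hb3]) (fun i => by simp [hd, ha4, hb4])
    hdmean
  -- each summand is nonneg
  have hterm_nonneg : ∀ i ∈ Finset.range (K + 1), ∀ j ∈ Finset.range (K + 1),
      0 ≤ (deriv U (a (i : ℤ) (j : ℤ)) - deriv U (b (i : ℤ) (j : ℤ)))
              * d (i : ℤ) (j : ℤ)
            + γ * (((d ((i : ℤ) + 1) (j : ℤ) - d (i : ℤ) (j : ℤ)) / h)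
                    * ((d ((i : ℤ) + 1) (j : ℤ) - d (i : ℤ) (j : ℤ)) / h)
                  + ((d (i : ℤ) ((j : ℤ) + 1) - d (i : ℤ) (j : ℤ)) / h)
                    * ((d (i : ℤ) ((j : ℤ) + 1) - d (i : ℤ) (j : ℤ)) / h)) := by
    intro i _ j _
    have h1 : 0 ≤ (deriv U (a (i : ℤ) (j : ℤ)) - deriv U (b (i : ℤ) (j : ℤ)))
        * d (i : ℤ) (j : ℤ) := by
      rcases le_total (a (i : ℤ) (j : ℤ)) (b (i : ℤ) (j : ℤ)) with hle | hle
      · have h1 := sub_nonpos.2 (hmono hle)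
        have h2 : d (i : ℤ) (j : ℤ) ≤ 0 := sub_nonpos.2 hle
        nlinarith
      · exact mul_nonneg (sub_nonneg.2 (hmono hle)) (sub_nonneg.2 hle)
    have h2 : 0 ≤ ((d ((i : ℤ) + 1) (j : ℤ) - d (i : ℤ) (j : ℤ)) / h)
                    * ((d ((i : ℤ) + 1) (j : ℤ) - d (i : ℤ) (j : ℤ)) / h)
                  + ((d (i : ℤ) ((j : ℤ) + 1) - d (i : ℤ) (j : ℤ)) / h)
                    * ((d (i : ℤ) ((j : ℤ) + 1) - d (i : ℤ) (j : ℤ)) / h) :=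
      add_nonneg (mul_self_nonneg _) (mul_self_nonneg _)
    exact add_nonneg h1 (mul_nonneg hγ.le h2)
  -- rewrite hkey in terms of d
  have hkey' : ∑ i ∈ Finset.range (K + 1), ∑ j ∈ Finset.range (K + 1),
      ((deriv U (a (i : ℤ) (j : ℤ)) - deriv U (b (i : ℤ) (j : ℤ)))
              * d (i : ℤ) (j : ℤ)
            + γ * (((d ((i : ℤ) + 1) (j : ℤ) - d (i : ℤ) (j : ℤ)) / h)
                    * ((d ((i : ℤ) + 1) (j : ℤ) - d (i : ℤ) (j : ℤ)) / h)
                  + ((d (i : ℤ) ((j : ℤ) + 1) - d (i : ℤ) (j : ℤ)) / h)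
                    * ((d (i : ℤ) ((j : ℤ) + 1) - d (i : ℤ) (j : ℤ)) / h))) = 0 := by
    rw [← hkey]
  -- all summands vanish
  have hzero : ∀ i ∈ Finset.range (K + 1), ∀ j ∈ Finset.range (K + 1),
      (deriv U (a (i : ℤ) (j : ℤ)) - deriv U (b (i : ℤ) (j : ℤ)))
              * d (i : ℤ) (j : ℤ)
            + γ * (((d ((i : ℤ) + 1) (j : ℤ) - d (i : ℤ) (j : ℤ)) / h)
                    * ((d ((i : ℤ) + 1) (j : ℤ) - d (i : ℤ) (j : ℤ)) / h)
                  + ((d (i : ℤ) ((j : ℤ) + 1) - d (i : ℤ) (j : ℤ)) / h)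
                    * ((d (i : ℤ) ((j : ℤ) + 1) - d (i : ℤ) (j : ℤ)) / h)) = 0 := by
    intro i hi j hj
    have houter := (Finset.sum_eq_zero_iff_of_nonneg
      (fun i hi => Finset.sum_nonneg (fun j hj => hterm_nonneg i hi j hj))).1 hkey' i hi
    exact (Finset.sum_eq_zero_iff_of_nonneg (fun j hj => hterm_nonneg i hi j hj)).1
      houter j hj
  -- gradient terms vanish pointwise
  have hgrad : ∀ i ∈ Finset.range (K + 1), ∀ j ∈ Finset.range (K + 1),
      d ((i : ℤ) + 1) (j : ℤ) = d (i : ℤ) (j : ℤ) ∧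
      d (i : ℤ) ((j : ℤ) + 1) = d (i : ℤ) (j : ℤ) := by
    intro i hi j hj
    have hz := hzero i hi j hj
    have h1 : 0 ≤ (deriv U (a (i : ℤ) (j : ℤ)) - deriv U (b (i : ℤ) (j : ℤ)))
        * d (i : ℤ) (j : ℤ) := by
      rcases le_total (a (i : ℤ) (j : ℤ)) (b (i : ℤ) (j : ℤ)) with hle | hle
      · have h1 := sub_nonpos.2 (hmono hle)
        have h2 : d (i : ℤ) (j : ℤ) ≤ 0 := sub_nonpos.2 hle
        nlinarith
      · exact mul_nonneg (sub_nonneg.2 (hmono hle)) (sub_nonneg.2 hle)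
    set x := (d ((i : ℤ) + 1) (j : ℤ) - d (i : ℤ) (j : ℤ)) / h with hx
    set y := (d (i : ℤ) ((j : ℤ) + 1) - d (i : ℤ) (j : ℤ)) / h with hy
    have hsq : x * x + y * y = 0 := by
      by_contra hne
      have hpos : 0 < x * x + y * y :=
        lt_of_le_of_ne (add_nonneg (mul_self_nonneg x) (mul_self_nonneg y))
          (Ne.symm hne)
      nlinarith [mul_pos hγ hpos]
    have hx0 : x = 0 := by nlinarith [mul_self_nonneg x, mul_self_nonneg y]
    have hy0 : y = 0 := by nlinarith [mul_self_nonneg x, mul_self_nonneg y]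
    constructor
    · have := (div_eq_zero_iff.1 hx0).resolve_right hh.ne'
      linarith [this]
    · have := (div_eq_zero_iff.1 hy0).resolve_right hh.ne'
      linarith [this]
  -- d is constant on the grid
  have hconsti : ∀ i : ℕ, i ≤ K → ∀ j : ℕ, j ≤ K → d (i : ℤ) (j : ℤ) = d 0 (j : ℤ) := by
    intro i
    induction i with
    | zero => intro _ j _; rfl
    | succ n ih =>
      intro hn j hj
      have hn' : n ≤ K := Nat.le_of_succ_le hn
      have := (hgrad n (Finset.mem_range.2 (Nat.lt_succ_of_le hn'))
        j (Finset.mem_range.2 (Nat.lt_succ_of_le hj))).1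
      rw [show ((n + 1 : ℕ) : ℤ) = (n : ℤ) + 1 by push_cast; ring, this]
      exact ih hn' j hj
  have hconst : ∀ i : ℕ, i ≤ K → ∀ j : ℕ, j ≤ K → d (i : ℤ) (j : ℤ) = d 0 0 := by
    intro i hi j
    induction j with
    | zero => intro _; exact hconsti i hi 0 (Nat.zero_le K)
    | succ m ih =>
      intro hm
      have hm' : m ≤ K := Nat.le_of_succ_le hm
      have := (hgrad i (Finset.mem_range.2 (Nat.lt_succ_of_le hi))
        m (Finset.mem_range.2 (Nat.lt_succ_of_le hm'))).2
      rw [show ((m + 1 : ℕ) : ℤ) = (m : ℤ) + 1 by push_cast; ring, this]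
      exact ih hm'
  -- the constant is zero
  have hc0 : d 0 0 = 0 := by
    have : ∑ i ∈ Finset.range (K + 1), ∑ j ∈ Finset.range (K + 1),
        d (i : ℤ) (j : ℤ)
        = ((K + 1 : ℕ) : ℝ) * (((K + 1 : ℕ) : ℝ) * d 0 0) := by
      rw [Finset.sum_congr rfl (fun i hi => Finset.sum_congr rfl (fun j hj =>
        hconst i (Nat.lt_succ_iff.1 (Finset.mem_range.1 hi))
          j (Nat.lt_succ_iff.1 (Finset.mem_range.1 hj))))]
      simp [Finset.sum_const, mul_comm]
    rw [this] at hdmean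
    have hK : ((K + 1 : ℕ) : ℝ) ≠ 0 := by positivity
    rcases mul_eq_zero.1 hdmean with h' | h'
    · exact absurd h' hK
    · rcases mul_eq_zero.1 h' with h'' | h''
      · exact absurd h'' hK
      · exact h''
  -- conclude
  intro i j hi0 hiK hj0 hjK
  have hi : i = ((i.toNat : ℕ) : ℤ) := (Int.toNat_of_nonneg hi0).symm
  have hj : j = ((j.toNat : ℕ) : ℤ) := (Int.toNat_of_nonneg hj0).symm
  have hiK' : i.toNat ≤ K := by omega
  have hjK' : j.toNat ≤ K := by omega
  have := hconst i.toNat hiK' j.toNat hjK'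
  rw [← hi, ← hj, hc0] at this
  have : a i j - b i j = 0 := this
  linarith
end

section
/- Let U : ℝ → ℝ be convex differentiable, γ > 0, and suppose grid functions a, b on {0,…,K}² (extended by Neumann ghost cells) satisfy U'(a_{i,j}) - U'(b_{i,j}) - γ(Δ_h(a-b))_{i,j} = c for all (i,j) and some constant c, where (Δ_h f)_{i,j} = (f_{i+1,j} + f_{i-1,j} + f_{i,j+1} + f_{i,j-1} - 4f_{i,j})/h², and ∑_{i,j} a_{i,j} = ∑_{i,j} b_{i,j}. Then a = b. -/
/-!
With `d = a - b`, multiply the equation at `(i, j)` by `d i j` and sum over the grid. The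
constant `c` contributes `c ∑ d = 0` by the mass condition, and summation by parts (the Neumann
ghost cells kill the boundary terms) turns `-∑ d Δ_h d` into the discrete Dirichlet energy
of `d`. Since `U'` is monotone, `(U'(a) - U'(b)) (a - b) ≥ 0`, so the Dirichlet energy
vanishes: `d` is constant on the grid, and zero mass forces the constant to be `0`.
-/

open Finset

/-- The five-point Laplacian without the factor `h⁻²`. -/
def gridLaplacian (d : ℤ → ℤ → ℝ) (i j : ℤ) : ℝ :=
  d (i + 1) j + d (i - 1) j + d i (j + 1) + d i (j - 1) - 4 * d i j

def dirichletEnergy (K : ℕ) (d : ℤ → ℤ → ℝ) : ℝ :=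
  ∑ j ∈ range (K + 1), ∑ i ∈ range K, (d (i + 1) j - d i j) ^ 2
    + ∑ i ∈ range (K + 1), ∑ j ∈ range K, (d i (j + 1) - d i j) ^ 2

structure HasNeumannGhosts (K : ℕ) (d : ℤ → ℤ → ℝ) : Prop where
  left : ∀ j, d (-1) j = d 0 j
  right : ∀ j, d ((K : ℤ) + 1) j = d (K : ℤ) j
  bottom : ∀ i, d i (-1) = d i 0
  top : ∀ i, d i ((K : ℤ) + 1) = d i (K : ℤ)

theorem HasNeumannGhosts.sub {K : ℕ} {a b : ℤ → ℤ → ℝ} (ha : HasNeumannGhosts K a)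
    (hb : HasNeumannGhosts K b) : HasNeumannGhosts K (a - b) where
  left j := by simp only [Pi.sub_apply, ha.left, hb.left]
  right j := by simp only [Pi.sub_apply, ha.right, hb.right]
  bottom i := by simp only [Pi.sub_apply, ha.bottom, hb.bottom]
  top i := by simp only [Pi.sub_apply, ha.top, hb.top]

theorem sum_range_secondDiff_mul_self (K : ℕ) (f : ℤ → ℝ) (h0 : f (-1) = f 0)
    (hK : f ((K : ℤ) + 1) = f K) :
    ∑ i ∈ range (K + 1), (f (i + 1) + f (i - 1) - 2 * f i) * f i
      = -∑ i ∈ range K, (f (i + 1) - f i) ^ 2 := by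
  have forward : ∑ i ∈ range (K + 1), (f (i + 1) - f i) * f i
      = ∑ i ∈ range K, (f (i + 1) - f i) * f i := by
    rw [sum_range_succ, hK, sub_self, zero_mul, add_zero]
  have backward : ∑ i ∈ range (K + 1), (f (i - 1) - f i) * f i
      = ∑ i ∈ range K, (f i - f (i + 1)) * f (i + 1) := by
    rw [sum_range_succ']
    simp [h0]
  calc ∑ i ∈ range (K + 1), (f (i + 1) + f (i - 1) - 2 * f i) * f i
      = ∑ i ∈ range (K + 1), (f (i + 1) - f i) * f i
          + ∑ i ∈ range (K + 1), (f (i - 1) - f i) * f i := by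
        rw [← sum_add_distrib]
        exact sum_congr rfl fun i _ => by ring
    _ = -∑ i ∈ range K, (f (i + 1) - f i) ^ 2 := by
        rw [forward, backward, ← sum_add_distrib, ← sum_neg_distrib]
        exact sum_congr rfl fun i _ => by ring

theorem HasNeumannGhosts.sum_gridLaplacian_mul_self {K : ℕ} {d : ℤ → ℤ → ℝ}
    (hd : HasNeumannGhosts K d) :
    ∑ i ∈ range (K + 1), ∑ j ∈ range (K + 1), gridLaplacian d i j * d i j
      = -dirichletEnergy K d := by
  have hx j := sum_range_secondDiff_mul_self K (d · j) (hd.left j) (hd.right j)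
  have hy i := sum_range_secondDiff_mul_self K (d i ·) (hd.bottom i) (hd.top i)
  rw [dirichletEnergy, neg_add, ← sum_neg_distrib, ← sum_neg_distrib]
  simp only [← hx, ← hy]
  conv_rhs => rw [sum_comm]
  rw [← sum_add_distrib]
  refine sum_congr rfl fun i _ => ?_
  rw [← sum_add_distrib]
  exact sum_congr rfl fun j _ => by unfold gridLaplacian; ring

theorem dirichletEnergy_nonneg (K : ℕ) (d : ℤ → ℤ → ℝ) : 0 ≤ dirichletEnergy K d := by
  unfold dirichletEnergy
  positivity

theorem apply_eq_apply_zero_of_forall_lt_succ {α : Type*} {K : ℕ} {f : ℤ → α}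
    (hf : ∀ i < K, f ((i : ℤ) + 1) = f i) : ∀ i ≤ K, f i = f 0 := by
  intro i hi
  induction i with
  | zero => rfl
  | succ i ih => rw [Nat.cast_succ, hf i hi, ih (Nat.le_of_succ_le hi)]

theorem eq_zero_of_sum_sum_sq_eq_zero {ι κ : Type*} {s : Finset ι} {t : Finset κ}
    {g : ι → κ → ℝ} (h : ∑ i ∈ s, ∑ j ∈ t, g i j ^ 2 = 0) :
    ∀ i ∈ s, ∀ j ∈ t, g i j = 0 :=
  fun i hi j hj => pow_eq_zero_iff two_ne_zero |>.1 <|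
    (sum_eq_zero_iff_of_nonneg fun _ _ => by positivity).1
      ((sum_eq_zero_iff_of_nonneg fun _ _ => by positivity).1 h i hi) j hj

theorem eq_of_dirichletEnergy_eq_zero {K : ℕ} {d : ℤ → ℤ → ℝ}
    (hE : dirichletEnergy K d = 0) :
    ∀ i ≤ K, ∀ j ≤ K, d i j = d 0 0 := by
  obtain ⟨hX, hY⟩ := (add_eq_zero_iff_of_nonneg (by positivity) (by positivity)).1 hE
  have hx : ∀ j ≤ K, ∀ i < K, d ((i : ℤ) + 1) j = d i j := fun j hj i hi =>
    sub_eq_zero.1 <|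
      eq_zero_of_sum_sum_sq_eq_zero (g := fun j i : ℕ => d ((i : ℤ) + 1) j - d i j)
      hX j (mem_range_succ_iff.2 hj) i (mem_range.2 hi)
  have hy : ∀ i ≤ K, ∀ j < K, d i ((j : ℤ) + 1) = d i j := fun i hi j hj =>
    sub_eq_zero.1 <|
      eq_zero_of_sum_sum_sq_eq_zero (g := fun i j : ℕ => d i ((j : ℤ) + 1) - d i j)
      hY i (mem_range_succ_iff.2 hi) j (mem_range.2 hj)
  intro i hi j hj
  exact (apply_eq_apply_zero_of_forall_lt_succ (f := fun i => d i j) (hx j hj) i hi).trans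
    (apply_eq_apply_zero_of_forall_lt_succ (f := d 0) (hy 0 K.zero_le) j hj)

theorem HasNeumannGhosts.eq_zero_of_sub_mul_gridLaplacian_eq_const {K : ℕ} {μ c : ℝ}
    {d e : ℤ → ℤ → ℝ} (hd : HasNeumannGhosts K d) (hμ : 0 < μ)
    (hed : ∀ i ≤ K, ∀ j ≤ K, 0 ≤ e i j * d i j)
    (heq : ∀ i ≤ K, ∀ j ≤ K, e i j - μ * gridLaplacian d i j = c)
    (hmass : ∑ i ∈ range (K + 1), ∑ j ∈ range (K + 1), d i j = 0) :
    ∀ i ≤ K, ∀ j ≤ K, d i j = 0 := by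
  have hbalance : ∑ i ∈ range (K + 1), ∑ j ∈ range (K + 1), e i j * d i j
      + μ * dirichletEnergy K d = 0 := by
    calc _ = ∑ i ∈ range (K + 1), ∑ j ∈ range (K + 1),
            (e i j - μ * gridLaplacian d i j) * d i j := by
          simp only [sub_mul, sum_sub_distrib, mul_assoc, ← mul_sum,
            hd.sum_gridLaplacian_mul_self]
          ring
      _ = ∑ i ∈ range (K + 1), ∑ j ∈ range (K + 1), c * d i j :=
          sum_congr rfl fun i hi => sum_congr rfl fun j hj => by
            rw [heq i (mem_range_succ_iff.1 hi) j (mem_range_succ_iff.1 hj)]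
      _ = 0 := by simp only [← mul_sum, hmass, mul_zero]
  have hE : dirichletEnergy K d = 0 := by
    have hT : 0 ≤ ∑ i ∈ range (K + 1), ∑ j ∈ range (K + 1), e i j * d i j :=
      sum_nonneg fun i hi => sum_nonneg fun j hj =>
        hed i (mem_range_succ_iff.1 hi) j (mem_range_succ_iff.1 hj)
    have hμE := (add_eq_zero_iff_of_nonneg hT
      (mul_nonneg hμ.le (dirichletEnergy_nonneg K d))).1 hbalance |>.2
    exact (mul_eq_zero.1 hμE).resolve_left hμ.ne'
  have hconst := eq_of_dirichletEnergy_eq_zero hE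
  have hd00 : d 0 0 = 0 := by
    rw [sum_congr rfl fun i hi => sum_congr rfl fun j hj =>
      hconst i (mem_range_succ_iff.1 hi) j (mem_range_succ_iff.1 hj)] at hmass
    simpa [sum_const, K.cast_add_one_ne_zero] using hmass
  intro i hi j hj
  rw [hconst i hi j hj, hd00]

/-- Discrete rigidity: if `U'(a) - U'(b) - γ Δ_h(a - b)` is constant on the
grid (Neumann ghost extension) and `a`, `b` have equal total mass, then
`a = b`. -/
theorem discrete_laplacian_rigidity (K : ℕ) (hK : 0 < K) (h γ : ℝ)
    (hh : h = 1 / (K : ℝ)) (hγ : 0 < γ)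
    (U : ℝ → ℝ) (hU : ConvexOn ℝ Set.univ U) (hUd : Differentiable ℝ U)
    (a b : ℤ → ℤ → ℝ) (c : ℝ)
    (ha1 : ∀ j, a (-1) j = a 0 j) (ha2 : ∀ j, a ((K : ℤ) + 1) j = a (K : ℤ) j)
    (ha3 : ∀ i, a i (-1) = a i 0) (ha4 : ∀ i, a i ((K : ℤ) + 1) = a i (K : ℤ))
    (hb1 : ∀ j, b (-1) j = b 0 j) (hb2 : ∀ j, b ((K : ℤ) + 1) j = b (K : ℤ) j)
    (hb3 : ∀ i, b i (-1) = b i 0) (hb4 : ∀ i, b i ((K : ℤ) + 1) = b i (K : ℤ))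
    (heq : ∀ i j : ℤ, 0 ≤ i → i ≤ K → 0 ≤ j → j ≤ K →
      deriv U (a i j) - deriv U (b i j)
        - γ * (((a (i + 1) j - b (i + 1) j) + (a (i - 1) j - b (i - 1) j)
                  + (a i (j + 1) - b i (j + 1)) + (a i (j - 1) - b i (j - 1))
                  - 4 * (a i j - b i j)) / h ^ 2) = c)
    (hmass : ∑ i ∈ Finset.range (K + 1), ∑ j ∈ Finset.range (K + 1),
        a (i : ℤ) (j : ℤ)
      = ∑ i ∈ Finset.range (K + 1), ∑ j ∈ Finset.range (K + 1),
          b (i : ℤ) (j : ℤ)) :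
    ∀ i j : ℤ, 0 ≤ i → i ≤ K → 0 ≤ j → j ≤ K → a i j = b i j := by
  have hμ : 0 < γ / h ^ 2 := by
    have : (0 : ℝ) < K := by exact_mod_cast hK
    rw [hh]
    positivity
  have hmono : Monotone (deriv U) :=
    monotoneOn_univ.1 (hU.monotoneOn_deriv fun x _ => hUd x)
  have hd : HasNeumannGhosts K (a - b) :=
    HasNeumannGhosts.sub ⟨ha1, ha2, ha3, ha4⟩ ⟨hb1, hb2, hb3, hb4⟩
  have hpairing : ∀ x y, 0 ≤ (deriv U x - deriv U y) * (x - y) :=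
    fun x y => (monovary_id_iff.2 hmono).sub_mul_sub_nonneg y x
  have hgrid : ∀ i ≤ K, ∀ j ≤ K, deriv U (a i j) - deriv U (b i j)
      - γ / h ^ 2 * gridLaplacian (a - b) i j = c := fun i hi j hj => by
    have := heq i j (Int.natCast_nonneg i) (by exact_mod_cast hi)
      (Int.natCast_nonneg j) (by exact_mod_cast hj)
    simp only [gridLaplacian, Pi.sub_apply]
    linear_combination this
  have hab := hd.eq_zero_of_sub_mul_gridLaplacian_eq_const
    (e := fun i j => deriv U (a i j) - deriv U (b i j)) hμ
    (fun i _ j _ => hpairing (a i j) (b i j)) hgrid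
    (by simp only [Pi.sub_apply, sum_sub_distrib, hmass, sub_self])
  intro i j hi0 hiK hj0 hjK
  lift i to ℕ using hi0
  lift j to ℕ using hj0
  exact sub_eq_zero.1 (hab i (by exact_mod_cast hiK) j (by exact_mod_cast hjK))
end

section
/- Divergence-free rewriting of the discrete advection term: if (div_h(ρ v))_{i,j} = 0 for all (i,j), then 4h (diṽ_h(ρ v ⊗ v))_{i,j} = (v_{i+1,j} - v_{i,j})(ρ_{i,j}u_{i,j} + ρ_{i+1,j}u_{i+1,j}) - (v_{i-1,j} - v_{i,j})(ρ_{i,j}u_{i,j} + ρ_{i-1,j}u_{i-1,j}) + (v_{i,j+1} - v_{i,j})(ρ_{i,j}w_{i,j} + ρ_{i,j+1}w_{i,j+1}) - (v_{i,j-1} - v_{i,j})(ρ_{i,j}w_{i,j} + ρ_{i,j-1}w_{i,j-1}). -/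
/-- Divergence-free rewriting of the discrete advection term: if
`(div_h(ρ v))_{i,j} = 0` then `4h (div~_h(ρ v ⊗ v))_{i,j}` equals the
velocity-difference form, componentwise. -/
theorem divfree_advection_rewriting (h : ℝ) (hh : 0 < h) (ρ u w : ℤ → ℤ → ℝ)
    (i j : ℤ) (hdiv : cdiv h ρ u w i j = 0) :
    (4 * h * advX h ρ u w i j
      = (u (i + 1) j - u i j) * (ρ i j * u i j + ρ (i + 1) j * u (i + 1) j)
        - (u (i - 1) j - u i j) * (ρ i j * u i j + ρ (i - 1) j * u (i - 1) j)
        + (u i (j + 1) - u i j) * (ρ i j * w i j + ρ i (j + 1) * w i (j + 1))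
        - (u i (j - 1) - u i j) * (ρ i j * w i j + ρ i (j - 1) * w i (j - 1)))
    ∧
    (4 * h * advY h ρ u w i j
      = (w (i + 1) j - w i j) * (ρ i j * u i j + ρ (i + 1) j * u (i + 1) j)
        - (w (i - 1) j - w i j) * (ρ i j * u i j + ρ (i - 1) j * u (i - 1) j)
        + (w i (j + 1) - w i j) * (ρ i j * w i j + ρ i (j + 1) * w i (j + 1))
        - (w i (j - 1) - w i j) * (ρ i j * w i j + ρ i (j - 1) * w i (j - 1))) := by
  have hne : h ≠ 0 := ne_of_gt hh
  have key : ρ (i + 1) j * u (i + 1) j - ρ (i - 1) j * u (i - 1) j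
      + ρ i (j + 1) * w i (j + 1) - ρ i (j - 1) * w i (j - 1) = 0 := by
    have := hdiv
    unfold cdiv at this
    field_simp at this
    linarith
  constructor
  · unfold advX
    field_simp
    linear_combination (2 * u i j) * key
  · unfold advY
    field_simp
    linear_combination (2 * w i j) * key
end

section
/- Fully discrete mass conservation: let (ρ^{n+1}, v^{n+1}) satisfy ρ^{n+1}_{i,j} - ρ^n_{i,j} + τ (div_h(ρ^{n+1} v^{n+1}))_{i,j} = 0 for (i,j) ∈ {0,…,K}², where ρ^{n+1} is extended by Neumann ghost cells and v^{n+1} by anti-reflecting ghost cells. Then ∑_{i,j=0}^{K} ρ^{n+1}_{i,j} = ∑_{i,j=0}^{K} ρ^n_{i,j}. -/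
lemma tele_aux (f : ℤ → ℝ) (M : ℕ) :
    ∑ i ∈ Finset.range (M + 1), (f ((i : ℤ) + 1) - f ((i : ℤ) - 1))
      = f ((M : ℤ) + 1) + f (M : ℤ) - f 0 - f (-1) := by
  induction M with
  | zero => simp
  | succ n ih =>
    rw [Finset.sum_range_succ, ih]
    push_cast
    have h1 : (n : ℤ) + 1 - 1 = (n : ℤ) := by ring
    rw [h1]
    ring

/-- Fully discrete mass conservation: the scheme
`ρ'_{i,j} - ρ_{i,j} + τ (div_h(ρ' v'))_{i,j} = 0` with Neumann ghost cells for
`ρ'` and anti-reflecting ghost cells for `v' = (u', w')` conserves the total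
mass. -/
theorem fully_discrete_mass_conservation (K : ℕ) (h τ : ℝ) (hh : 0 < h)
    (hτ : 0 < τ) (ρ ρ' u' w' : ℤ → ℤ → ℝ)
    (hρ1 : ∀ j, ρ' (-1) j = ρ' 0 j) (hρ2 : ∀ j, ρ' ((K : ℤ) + 1) j = ρ' (K : ℤ) j)
    (hρ3 : ∀ i, ρ' i (-1) = ρ' i 0) (hρ4 : ∀ i, ρ' i ((K : ℤ) + 1) = ρ' i (K : ℤ))
    (hu1 : ∀ j, u' (-1) j = -u' 0 j) (hu2 : ∀ j, u' ((K : ℤ) + 1) j = -u' (K : ℤ) j)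
    (hu3 : ∀ i, u' i (-1) = -u' i 0) (hu4 : ∀ i, u' i ((K : ℤ) + 1) = -u' i (K : ℤ))
    (hw1 : ∀ j, w' (-1) j = -w' 0 j) (hw2 : ∀ j, w' ((K : ℤ) + 1) j = -w' (K : ℤ) j)
    (hw3 : ∀ i, w' i (-1) = -w' i 0) (hw4 : ∀ i, w' i ((K : ℤ) + 1) = -w' i (K : ℤ))
    (hscheme : ∀ i j : ℤ, 0 ≤ i → i ≤ K → 0 ≤ j → j ≤ K →
      ρ' i j - ρ i j + τ * cdiv h ρ' u' w' i j = 0) :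
    ∑ i ∈ Finset.range (K + 1), ∑ j ∈ Finset.range (K + 1), ρ' (i : ℤ) (j : ℤ)
      = ∑ i ∈ Finset.range (K + 1), ∑ j ∈ Finset.range (K + 1),
          ρ (i : ℤ) (j : ℤ) := by
  -- column sums of the x-differences vanish
  have hF : ∀ j : ℤ,
      ∑ i ∈ Finset.range (K + 1),
        (ρ' ((i : ℤ) + 1) j * u' ((i : ℤ) + 1) j
          - ρ' ((i : ℤ) - 1) j * u' ((i : ℤ) - 1) j) = 0 := by
    intro j
    have := tele_aux (fun i => ρ' i j * u' i j) K
    rw [this, hρ1, hρ2, hu1, hu2]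
    ring
  have hG : ∀ i : ℤ,
      ∑ j ∈ Finset.range (K + 1),
        (ρ' i ((j : ℤ) + 1) * w' i ((j : ℤ) + 1)
          - ρ' i ((j : ℤ) - 1) * w' i ((j : ℤ) - 1)) = 0 := by
    intro i
    have := tele_aux (fun j => ρ' i j * w' i j) K
    rw [this, hρ3, hρ4, hw3, hw4]
    ring
  have hdiv : ∑ i ∈ Finset.range (K + 1), ∑ j ∈ Finset.range (K + 1),
      cdiv h ρ' u' w' (i : ℤ) (j : ℤ) = 0 := by
    have step : ∑ i ∈ Finset.range (K + 1), ∑ j ∈ Finset.range (K + 1),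
        cdiv h ρ' u' w' (i : ℤ) (j : ℤ)
      = (∑ i ∈ Finset.range (K + 1), ∑ j ∈ Finset.range (K + 1),
          (1 / (2 * h)) * (ρ' ((i : ℤ) + 1) j * u' ((i : ℤ) + 1) j
            - ρ' ((i : ℤ) - 1) j * u' ((i : ℤ) - 1) j))
        + (∑ i ∈ Finset.range (K + 1), ∑ j ∈ Finset.range (K + 1),
          (1 / (2 * h)) * (ρ' (i : ℤ) ((j : ℤ) + 1) * w' (i : ℤ) ((j : ℤ) + 1)
            - ρ' (i : ℤ) ((j : ℤ) - 1) * w' (i : ℤ) ((j : ℤ) - 1))) := by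
      rw [← Finset.sum_add_distrib]
      refine Finset.sum_congr rfl fun i _ => ?_
      rw [← Finset.sum_add_distrib]
      refine Finset.sum_congr rfl fun j _ => ?_
      simp only [cdiv]; ring
    rw [step]
    have t1 : ∑ i ∈ Finset.range (K + 1), ∑ j ∈ Finset.range (K + 1),
        (1 / (2 * h)) * (ρ' ((i : ℤ) + 1) j * u' ((i : ℤ) + 1) j
          - ρ' ((i : ℤ) - 1) j * u' ((i : ℤ) - 1) j) = 0 := by
      rw [Finset.sum_comm]
      refine Finset.sum_eq_zero fun j _ => ?_
      rw [← Finset.mul_sum, hF]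
      ring
    have t2 : ∑ i ∈ Finset.range (K + 1), ∑ j ∈ Finset.range (K + 1),
        (1 / (2 * h)) * (ρ' (i : ℤ) ((j : ℤ) + 1) * w' (i : ℤ) ((j : ℤ) + 1)
          - ρ' (i : ℤ) ((j : ℤ) - 1) * w' (i : ℤ) ((j : ℤ) - 1)) = 0 := by
      refine Finset.sum_eq_zero fun i _ => ?_
      rw [← Finset.mul_sum, hG]
      ring
    rw [t1, t2]; ring
  have key : ∑ i ∈ Finset.range (K + 1), ∑ j ∈ Finset.range (K + 1), ρ' (i : ℤ) (j : ℤ)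
      = ∑ i ∈ Finset.range (K + 1), ∑ j ∈ Finset.range (K + 1),
          (ρ (i : ℤ) (j : ℤ) - τ * cdiv h ρ' u' w' (i : ℤ) (j : ℤ)) := by
    refine Finset.sum_congr rfl fun i hi => Finset.sum_congr rfl fun j hj => ?_
    have hi' : (i : ℤ) ≤ (K : ℤ) := by
      exact_mod_cast Nat.lt_succ_iff.mp (Finset.mem_range.mp hi)
    have hj' : (j : ℤ) ≤ (K : ℤ) := by
      exact_mod_cast Nat.lt_succ_iff.mp (Finset.mem_range.mp hj)
    have := hscheme i j (Int.ofNat_nonneg i) hi' (Int.ofNat_nonneg j) hj'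
    linarith
  rw [key]
  simp only [Finset.sum_sub_distrib, ← Finset.mul_sum]
  rw [hdiv]
  ring
end
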